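/- arXiv:2011.00918 — 4 statements merged into one kernel-verified Lean document; each statement's English description precedes it below -/
import Mathlib

section
/- Let c₁ = 355.03, c₂ = −68.19, c₃ = 791.32 and define the butane dihedral potential V : ℝ → ℝ by V(φ) = c₁(1 + cos φ) + c₂(1 − cos 2φ) + c₃(1 + cos 3φ). Then V(φ) ≥ 0 for every φ ∈ ℝ, and V(φ) = 0 if and only if φ ≡ π (mod 2π); i.e., the global minimum of the butane potential is attained exactly at the trans (fully stretched) conformation φ = π, with energy value 0. -/
open Real

/-- The butane dihedral potential (energies in units of k_B·K). -/
noncomputable def V (φ : ℝ) : ℝ :=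
  355.03 * (1 + Real.cos φ) + (-68.19) * (1 - Real.cos (2 * φ)) +
    791.32 * (1 + Real.cos (3 * φ))

/-- The butane potential is nonnegative, and vanishes exactly at the trans
conformation `φ ≡ π (mod 2π)`. -/
theorem butane_global_min (φ : ℝ) :
    0 ≤ V φ ∧ (V φ = 0 ↔ ∃ m : ℤ, φ = π + 2 * π * m) := by
  set c := Real.cos φ with hc
  have key : V φ = (1 + c) * (3165.28 * c ^ 2 - 3028.9 * c + 1009.97) := by
    rw [V, Real.cos_two_mul, Real.cos_three_mul, ← hc]; ring
  have hc1 : -1 ≤ c := Real.neg_one_le_cos φ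
  have hQ : 0 < 3165.28 * c ^ 2 - 3028.9 * c + 1009.97 := by
    nlinarith [sq_nonneg (6330.56 * c - 3028.9)]
  have h1 : 0 ≤ 1 + c := by linarith
  constructor
  · rw [key]; positivity
  · rw [key]
    constructor
    · intro h
      have : 1 + c = 0 := by
        rcases mul_eq_zero.mp h with h' | h'
        · exact h'
        · linarith
      have hcm : Real.cos φ = -1 := by rw [hc] at this; linarith
      obtain ⟨k, hk⟩ := Real.cos_eq_neg_one_iff.mp hcm
      exact ⟨k, by rw [← hk]; ring⟩
    · rintro ⟨m, rfl⟩
      have hcm : Real.cos (π + 2 * π * m) = -1 :=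
        Real.cos_eq_neg_one_iff.mpr ⟨m, by ring⟩
      rw [hc, hcm]; ring
end

section
/- Let c₁ = 355.03, c₂ = −68.19, c₃ = 791.32 and define V : ℝ → ℝ by V(φ) = c₁(1 + cos φ) + c₂(1 − cos 2φ) + c₃(1 + cos 3φ). Then the set {φ ∈ [0, 2π) : V′(φ) = 0} of critical points of V in one period is finite and has exactly 6 elements. -/
/-!
With `c = cos φ`, the double- and triple-angle formulas give `V′(φ) = sin φ · q(c)` for the
quadratic `q(c) = -9495.84 c² - 272.76 c + 2018.93`. Since `q(±1) < 0 < q(0)`, `q` has one root in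
`(-1, 0)` and one in `(0, 1)`, and each is the cosine of exactly two angles in `[0, 2π)`. Together
with the zeros `0` and `π` of `sin`, where `cos = ±1`, this gives six critical points.
-/

open Real Set

theorem hasDerivAt_dihedral (a b c φ : ℝ) :
    HasDerivAt (fun φ => a * (1 + cos φ) + b * (1 - cos (2 * φ)) + c * (1 + cos (3 * φ)))
      (sin φ * (-12 * c * cos φ ^ 2 + 4 * b * cos φ + (3 * c - a))) φ := by
  have h₁ := (hasDerivAt_cos φ).const_add 1 |>.const_mul a
  have h₂ := ((hasDerivAt_id φ).const_mul 2).cos.const_sub 1 |>.const_mul b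
  have h₃ := ((hasDerivAt_id φ).const_mul 3).cos.const_add 1 |>.const_mul c
  refine ((h₁.add h₂).add h₃).congr_deriv ?_
  simp only [id, mul_one, sin_two_mul, sin_three_mul]
  linear_combination (12 * c * sin φ) * sin_sq_add_cos_sq φ

theorem quadratic_eq_zero_iff_of_roots {a b d r₁ r₂ : ℝ} (ha : a ≠ 0) (hr : r₁ ≠ r₂)
    (h₁ : a * r₁ ^ 2 + b * r₁ + d = 0) (h₂ : a * r₂ ^ 2 + b * r₂ + d = 0) (x : ℝ) :
    a * x ^ 2 + b * x + d = 0 ↔ x = r₁ ∨ x = r₂ := by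
  have hfactor : a * x ^ 2 + b * x + d = a * ((x - r₁) * (x - r₂)) := by
    have hsub : r₁ - r₂ ≠ 0 := sub_ne_zero.mpr hr
    apply mul_left_cancel₀ hsub
    linear_combination (x - r₂) * h₁ - (x - r₁) * h₂
  rw [hfactor, mul_eq_zero, mul_eq_zero, sub_eq_zero, sub_eq_zero, or_iff_right ha]

theorem exists_roots_of_sign_changes {a b d : ℝ} (hneg : a - b + d < 0) (hzero : 0 < d)
    (hpos : a + b + d < 0) :
    ∃ r₁ ∈ Ioo (-1 : ℝ) 0, ∃ r₂ ∈ Ioo (0 : ℝ) 1,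
      ∀ x, a * x ^ 2 + b * x + d = 0 ↔ x = r₁ ∨ x = r₂ := by
  set q : ℝ → ℝ := fun x => a * x ^ 2 + b * x + d
  have hq : Continuous q := by fun_prop
  obtain ⟨r₁, hr₁, hq₁⟩ : ∃ r₁ ∈ Ioo (-1 : ℝ) 0, q r₁ = 0 :=
    intermediate_value_Ioo (by norm_num) hq.continuousOn ⟨by simp only [q]; linarith, by simpa [q]⟩
  obtain ⟨r₂, hr₂, hq₂⟩ : ∃ r₂ ∈ Ioo (0 : ℝ) 1, q r₂ = 0 :=
    intermediate_value_Ioo' (by norm_num) hq.continuousOn ⟨by simpa [q] using hpos, by simpa [q]⟩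
  have ha : a ≠ 0 := by intro ha; linarith
  exact ⟨r₁, hr₁, r₂, hr₂,
    quadratic_eq_zero_iff_of_roots ha (hr₁.2.trans hr₂.1).ne hq₁ hq₂⟩

theorem sep_Ico_sin_eq_zero : {φ ∈ Ico 0 (2 * π) | sin φ = 0} = {0, π} := by
  ext φ
  simp only [mem_Ico, mem_insert_iff, mem_singleton_iff]
  constructor
  · rintro ⟨⟨h₀, h₂π⟩, hsin⟩
    obtain ⟨n, rfl⟩ := sin_eq_zero_iff.mp hsin
    have hn₀ : (0 : ℤ) ≤ n := by
      have : (0 : ℝ) ≤ n := nonneg_of_mul_nonneg_left h₀ pi_pos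
      exact_mod_cast this
    have hn₂ : n < 2 := by
      have : (n : ℝ) < 2 := lt_of_mul_lt_mul_right h₂π pi_pos.le
      exact_mod_cast this
    interval_cases n <;> simp
  · rintro (rfl | rfl)
    · exact ⟨⟨le_rfl, by positivity⟩, sin_zero⟩
    · exact ⟨⟨pi_pos.le, by linarith [pi_pos]⟩, sin_pi⟩

theorem sep_Ico_cos_eq {x : ℝ} (hx : x ∈ Ioo (-1) 1) :
    {φ ∈ Ico 0 (2 * π) | cos φ = x} = {arccos x, 2 * π - arccos x} := by
  have hpos : 0 < arccos x := arccos_pos.mpr hx.2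
  have hlt : arccos x < π := arccos_lt_pi.mpr hx.1
  have hcos : cos (arccos x) = x := cos_arccos hx.1.le hx.2.le
  ext φ
  simp only [mem_Ico, mem_insert_iff, mem_singleton_iff]
  constructor
  · rintro ⟨⟨h₀, h₂π⟩, rfl⟩
    rcases le_or_gt φ π with hφ | hφ
    · exact Or.inl (arccos_cos h₀ hφ).symm
    · right
      rw [← cos_two_pi_sub, arccos_cos (by linarith) (by linarith)]
      ring
  · rintro (rfl | rfl)
    · exact ⟨⟨hpos.le, by linarith⟩, hcos⟩
    · exact ⟨⟨by linarith, by linarith⟩, by rw [cos_two_pi_sub, hcos]⟩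

theorem ncard_sep_Ico_cos_eq {x : ℝ} (hx : x ∈ Ioo (-1) 1) :
    {φ ∈ Ico 0 (2 * π) | cos φ = x}.ncard = 2 := by
  rw [sep_Ico_cos_eq hx, ncard_pair]
  linarith [arccos_lt_pi.mpr hx.1]

theorem ncard_sep_Ico_sin_mul_eq_zero {q : ℝ → ℝ} {r₁ r₂ : ℝ}
    (hq : ∀ x, q x = 0 ↔ x = r₁ ∨ x = r₂) (hr₁ : r₁ ∈ Ioo (-1) 1) (hr₂ : r₂ ∈ Ioo (-1) 1)
    (hr : r₁ ≠ r₂) :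
    {φ ∈ Ico 0 (2 * π) | sin φ * q (cos φ) = 0}.ncard = 6 := by
  set I := Ico 0 (2 * π)
  have hsplit : {φ ∈ I | sin φ * q (cos φ) = 0} =
      {φ ∈ I | sin φ = 0} ∪ ({φ ∈ I | cos φ = r₁} ∪ {φ ∈ I | cos φ = r₂}) := by
    ext φ
    simp only [mem_sep_iff, mem_union, mul_eq_zero, hq]
    tauto
  have hsin : {φ ∈ I | sin φ = 0}.ncard = 2 := by
    rw [sep_Ico_sin_eq_zero, ncard_pair pi_pos.ne]
  have hcos₁ := ncard_sep_Ico_cos_eq hr₁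
  have hcos₂ := ncard_sep_Ico_cos_eq hr₂
  have hdisj_sin {r : ℝ} (hr : r ∈ Ioo (-1) 1) :
      Disjoint {φ ∈ I | sin φ = 0} {φ ∈ I | cos φ = r} := by
    refine disjoint_left.mpr fun φ hφ hφ' => ?_
    rcases sin_eq_zero_iff_cos_eq.mp hφ.2 with h | h <;> linarith [hφ'.2, hr.1, hr.2]
  have hdisj_cos : Disjoint {φ ∈ I | cos φ = r₁} {φ ∈ I | cos φ = r₂} :=
    disjoint_left.mpr fun φ hφ hφ' => hr (hφ.2.symm.trans hφ'.2)
  have hfin {s : Set ℝ} (hs : s.ncard = 2) : s.Finite := finite_of_ncard_ne_zero (by omega)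
  rw [hsplit, ncard_union_eq (disjoint_union_right.mpr ⟨hdisj_sin hr₁, hdisj_sin hr₂⟩)
    (hfin hsin) ((hfin hcos₁).union (hfin hcos₂)),
    ncard_union_eq hdisj_cos (hfin hcos₁) (hfin hcos₂), hsin, hcos₁, hcos₂]

theorem deriv_V (φ : ℝ) :
    deriv V φ = sin φ * (-9495.84 * cos φ ^ 2 + -272.76 * cos φ + 2018.93) := by
  have hV : HasDerivAt V _ φ := hasDerivAt_dihedral 355.03 (-68.19) 791.32 φ
  rw [hV.deriv]
  norm_num

/-- The butane potential has exactly 6 critical points in one period `[0, 2π)`. -/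
theorem butane_six_critical_points :
    {φ ∈ Set.Ico (0 : ℝ) (2 * π) | deriv V φ = 0}.Finite ∧
    {φ ∈ Set.Ico (0 : ℝ) (2 * π) | deriv V φ = 0}.ncard = 6 := by
  obtain ⟨r₁, hr₁, r₂, hr₂, hq⟩ :=
    exists_roots_of_sign_changes (a := -9495.84) (b := -272.76) (d := 2018.93)
      (by norm_num) (by norm_num) (by norm_num)
  have hcard : {φ ∈ Set.Ico (0 : ℝ) (2 * π) | deriv V φ = 0}.ncard = 6 := by
    simp only [deriv_V]
    exact ncard_sep_Ico_sin_mul_eq_zero hq ⟨hr₁.1, hr₁.2.trans one_pos⟩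
      ⟨neg_one_lt_zero.trans hr₂.1, hr₂.2⟩ (hr₁.2.trans hr₂.1).ne
  exact ⟨finite_of_ncard_ne_zero (by omega), hcard⟩
end

section
/- Let c₁ = 355.03, c₂ = −68.19, c₃ = 791.32, let V(φ) = c₁(1 + cos φ) + c₂(1 − cos 2φ) + c₃(1 + cos 3φ), and for n ≥ 1 define the alkane potential energy landscape fₙ : (Fin n → ℝ) → ℝ by fₙ(φ₁, …, φₙ) = Σᵢ V(φᵢ). Then the set of critical points of fₙ in the fundamental domain [0, 2π)ⁿ (points where the Fréchet derivative of fₙ vanishes) is finite and has exactly 6ⁿ elements. -/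
open Real

/-!
Writing `sin 2φ` and `sin 3φ` as `sin φ` times polynomials in `cos φ` gives
`V'(φ) = -sin φ · q(cos φ)` with `q` a quadratic whose two roots lie strictly between `-1` and `1`,
one of each sign. So `V'` vanishes exactly where `cos φ ∈ {1, -1, r₊, r₋}`; on `[0, 2π)` the values
`±1` are taken once each and `r₊`, `r₋` twice each, giving six critical angles
`0 < arccos r₊ < arccos r₋ < π < 2π - arccos r₋ < 2π - arccos r₊`. Since `fₙ` is a separable sum,
its critical points are exactly the `n`-tuples of critical angles of `V`.
-/

open Set

section SeparableSum

variable {𝕜 F ι : Type*} [NontriviallyNormedField 𝕜] [NormedAddCommGroup F] [NormedSpace 𝕜 F]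
  [Fintype ι] {g : 𝕜 → F} {x : ι → 𝕜}

theorem hasFDerivAt_sum_comp_apply (hg : ∀ i, DifferentiableAt 𝕜 g (x i)) :
    HasFDerivAt (fun y : ι → 𝕜 => ∑ i, g (y i))
      (∑ i, (ContinuousLinearMap.proj (R := 𝕜) i).smulRight (deriv g (x i))) x :=
  HasFDerivAt.fun_sum fun i _ =>
    ((hg i).hasDerivAt.hasFDerivAt.comp x (hasFDerivAt_apply i x)).congr_fderiv (by ext; simp)

theorem fderiv_sum_comp_apply_eq_zero_iff (hg : ∀ i, DifferentiableAt 𝕜 g (x i)) :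
    fderiv 𝕜 (fun y : ι → 𝕜 => ∑ i, g (y i)) x = 0 ↔ ∀ i, deriv g (x i) = 0 := by
  classical
  rw [(hasFDerivAt_sum_comp_apply hg).fderiv]
  refine ⟨fun h i => ?_, fun h => by simp [h]⟩
  simpa [Pi.single_apply] using DFunLike.congr_fun h (Pi.single i 1)

end SeparableSum

theorem cos_eq_iff_of_mem_Ico {r φ : ℝ} (hr : r ∈ Icc (-1) 1) (hφ : φ ∈ Ico 0 (2 * π)) :
    cos φ = r ↔ φ = arccos r ∨ φ = 2 * π - arccos r := by
  refine ⟨fun h => ?_, by rintro (rfl | rfl) <;> simp [cos_arccos hr.1 hr.2]⟩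
  subst h
  rcases le_or_gt φ π with hle | hgt
  · exact .inl (arccos_cos hφ.1 hle).symm
  · right
    rw [← cos_two_pi_sub, arccos_cos (by linarith [hφ.2]) (by linarith)]
    ring

noncomputable def cosQuadratic (c : ℝ) : ℝ := 9495.84 * c ^ 2 + 272.76 * c - 2018.93

theorem hasDerivAt_V (φ : ℝ) : HasDerivAt V (-(sin φ * cosQuadratic (cos φ))) φ := by
  have hcos (k : ℝ) : HasDerivAt (fun x => cos (k * x)) (-sin (k * φ) * k) φ :=
    (hasDerivAt_cos (k * φ)).comp φ (by simpa using (hasDerivAt_id φ).const_mul k)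
  unfold V
  refine ((((hasDerivAt_cos φ).const_add 1).const_mul 355.03).add
    (((hcos 2).const_sub 1).const_mul (-68.19)) |>.add
      (((hcos 3).const_add 1).const_mul 791.32)).congr_deriv ?_
  rw [cosQuadratic, sin_two_mul, sin_three_mul]
  linear_combination (9495.84 * sin φ) * sin_sq_add_cos_sq φ

noncomputable def cosQuadraticSqrtDiscrim : ℝ := √(discrim 9495.84 272.76 (-2018.93))

noncomputable def cosRootPos : ℝ := (-272.76 + cosQuadraticSqrtDiscrim) / (2 * 9495.84)
noncomputable def cosRootNeg : ℝ := (-272.76 - cosQuadraticSqrtDiscrim) / (2 * 9495.84)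

theorem cosQuadratic_eq_zero_iff (c : ℝ) :
    cosQuadratic c = 0 ↔ c = cosRootPos ∨ c = cosRootNeg := by
  rw [cosRootPos, cosRootNeg,
    ← quadratic_eq_zero_iff (a := 9495.84) (b := 272.76) (c := -2018.93) (by norm_num)]
  · simp only [cosQuadratic]; ring_nf
  · rw [cosQuadraticSqrtDiscrim, ← sq, sq_sqrt (by norm_num [discrim])]

theorem cosQuadraticSqrtDiscrim_mem : cosQuadraticSqrtDiscrim ∈ Ioo 273 18718 := by
  rw [cosQuadraticSqrtDiscrim]
  constructor
  · rw [lt_sqrt (by norm_num)]; norm_num [discrim]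
  · rw [sqrt_lt' (by norm_num)]; norm_num [discrim]

theorem cosRootNeg_mem : cosRootNeg ∈ Ioo (-1) 0 := by
  obtain ⟨h₁, h₂⟩ := cosQuadraticSqrtDiscrim_mem
  rw [cosRootNeg]
  exact ⟨by rw [lt_div_iff₀ (by norm_num)]; linarith,
    div_neg_of_neg_of_pos (by linarith) (by norm_num)⟩

theorem cosRootPos_mem : cosRootPos ∈ Ioo 0 1 := by
  obtain ⟨h₁, h₂⟩ := cosQuadraticSqrtDiscrim_mem
  rw [cosRootPos]
  exact ⟨div_pos (by linarith) (by norm_num), by rw [div_lt_one (by norm_num)]; linarith⟩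

theorem deriv_V_eq_zero_iff (φ : ℝ) :
    deriv V φ = 0 ↔ cos φ = 1 ∨ cos φ = -1 ∨ cos φ = cosRootPos ∨ cos φ = cosRootNeg := by
  rw [(hasDerivAt_V φ).deriv, neg_eq_zero, mul_eq_zero, sin_eq_zero_iff_cos_eq,
    cosQuadratic_eq_zero_iff, or_assoc]

noncomputable def criticalAngle : Fin 6 → ℝ :=
  ![0, arccos cosRootPos, arccos cosRootNeg, π,
    2 * π - arccos cosRootNeg, 2 * π - arccos cosRootPos]

theorem criticalAngle_strictMono : StrictMono criticalAngle := by
  have h₀ : 0 < arccos cosRootPos := arccos_pos.2 cosRootPos_mem.2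
  have h₁ : arccos cosRootPos < arccos cosRootNeg :=
    arccos_lt_arccos cosRootNeg_mem.1.le (cosRootNeg_mem.2.trans cosRootPos_mem.1)
      cosRootPos_mem.2.le
  have h₂ : arccos cosRootNeg < π := arccos_lt_pi.2 cosRootNeg_mem.1
  refine Fin.strictMono_iff_lt_succ.2 fun i => ?_
  fin_cases i <;> simp [criticalAngle] <;> linarith [cosRootPos_mem.2]

theorem criticalAngle_mem_Ico (k : Fin 6) : criticalAngle k ∈ Ico 0 (2 * π) := by
  have hmono := criticalAngle_strictMono.monotone
  refine ⟨hmono (Fin.zero_le k), (hmono (Fin.le_last k)).trans_lt ?_⟩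
  simpa [criticalAngle] using arccos_pos.2 cosRootPos_mem.2

theorem mem_Ico_and_deriv_V_eq_zero_iff (φ : ℝ) :
    φ ∈ Ico 0 (2 * π) ∧ deriv V φ = 0 ↔ φ ∈ range criticalAngle := by
  have hPos : cosRootPos ∈ Icc (-1) 1 := ⟨by linarith [cosRootPos_mem.1], cosRootPos_mem.2.le⟩
  have hNeg : cosRootNeg ∈ Icc (-1) 1 := ⟨cosRootNeg_mem.1.le, by linarith [cosRootNeg_mem.2]⟩
  constructor
  · rintro ⟨hφ, hd⟩
    rcases (deriv_V_eq_zero_iff φ).1 hd with h | h | h | h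
    · rcases (cos_eq_iff_of_mem_Ico (by norm_num) hφ).1 h with rfl | rfl
      · exact ⟨0, by simp [criticalAngle]⟩
      · simp at hφ
    · rcases (cos_eq_iff_of_mem_Ico (by norm_num) hφ).1 h with rfl | rfl
      exacts [⟨3, by simp [criticalAngle]⟩, ⟨3, by simp [criticalAngle]; ring⟩]
    · rcases (cos_eq_iff_of_mem_Ico hPos hφ).1 h with rfl | rfl
      exacts [⟨1, rfl⟩, ⟨5, rfl⟩]
    · rcases (cos_eq_iff_of_mem_Ico hNeg hφ).1 h with rfl | rfl
      exacts [⟨2, rfl⟩, ⟨4, rfl⟩]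
  · rintro ⟨k, rfl⟩
    refine ⟨criticalAngle_mem_Ico k, (deriv_V_eq_zero_iff _).2 ?_⟩
    fin_cases k <;> simp [criticalAngle, cos_arccos hPos.1 hPos.2, cos_arccos hNeg.1 hNeg.2]

theorem alkane_critical_points_general (n : ℕ) :
    {x : Fin n → ℝ | (∀ i, x i ∈ Set.Ico (0 : ℝ) (2 * π)) ∧
      fderiv ℝ (fun y : Fin n → ℝ => ∑ i, V (y i)) x = 0}.Finite ∧
    {x : Fin n → ℝ | (∀ i, x i ∈ Set.Ico (0 : ℝ) (2 * π)) ∧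
      fderiv ℝ (fun y : Fin n → ℝ => ∑ i, V (y i)) x = 0}.ncard = 6 ^ n := by
  have hcrit : {x : Fin n → ℝ | (∀ i, x i ∈ Ico (0 : ℝ) (2 * π)) ∧
      fderiv ℝ (fun y : Fin n → ℝ => ∑ i, V (y i)) x = 0} =
      range (Pi.map fun _ : Fin n => criticalAngle) := by
    ext x
    rw [range_piMap, mem_univ_pi, mem_ofPred_eq,
      fderiv_sum_comp_apply_eq_zero_iff fun i => (hasDerivAt_V (x i)).differentiableAt,
      ← forall_and]
    exact forall_congr' fun i => mem_Ico_and_deriv_V_eq_zero_iff (x i)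
  rw [hcrit, ncard_range_of_injective
    (Function.Injective.piMap fun _ => criticalAngle_strictMono.injective)]
  exact ⟨finite_range _, by simp⟩

/-- The alkane potential energy landscape `fₙ(φ₁, …, φₙ) = Σᵢ V(φᵢ)` has exactly
`6ⁿ` critical points in the fundamental domain `[0, 2π)ⁿ`. -/
theorem alkane_critical_points (n : ℕ) (hn : 1 ≤ n) :
    {x : Fin n → ℝ | (∀ i, x i ∈ Set.Ico (0 : ℝ) (2 * π)) ∧
      fderiv ℝ (fun y : Fin n → ℝ => ∑ i, V (y i)) x = 0}.Finite ∧
    {x : Fin n → ℝ | (∀ i, x i ∈ Set.Ico (0 : ℝ) (2 * π)) ∧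
      fderiv ℝ (fun y : Fin n → ℝ => ∑ i, V (y i)) x = 0}.ncard = 6 ^ n :=
  alkane_critical_points_general n
end

section
/- Let c₁ = 355.03, c₂ = −68.19, c₃ = 791.32, let V(φ) = c₁(1 + cos φ) + c₂(1 − cos 2φ) + c₃(1 + cos 3φ), and for n ≥ 1 define fₙ : (Fin n → ℝ) → ℝ by fₙ(φ₁, …, φₙ) = Σᵢ V(φᵢ). Then fₙ(φ) ≥ 0 for all φ ∈ (Fin n → ℝ), and fₙ(φ) = 0 if and only if φᵢ ≡ π (mod 2π) for every i; i.e., the global minimum of the alkane potential energy landscape is attained exactly at the fully stretched (all-trans) conformation, with energy 0. -/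
open Real

lemma V_factored (φ : ℝ) :
    V φ = (Real.cos φ + 1) *
      (3165.28 * Real.cos φ ^ 2 - 3028.9 * Real.cos φ + 1009.97) := by
  rw [V, Real.cos_two_mul, Real.cos_three_mul]
  ring

lemma quad_pos (x : ℝ) : 0 < 3165.28 * x ^ 2 - 3028.9 * x + 1009.97 := by
  nlinarith [sq_nonneg (2 * 3165.28 * x - 3028.9)]

lemma V_nonneg (φ : ℝ) : 0 ≤ V φ := by
  rw [V_factored]
  have h1 : (0:ℝ) ≤ Real.cos φ + 1 := by nlinarith [Real.neg_one_le_cos φ]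
  exact mul_nonneg h1 (quad_pos φ.cos).le

lemma V_eq_zero_iff (φ : ℝ) : V φ = 0 ↔ ∃ m : ℤ, φ = π + 2 * π * m := by
  rw [V_factored]
  constructor
  · intro h
    have hq := quad_pos (Real.cos φ)
    have hc : Real.cos φ = -1 := by
      rcases mul_eq_zero.mp h with h1 | h1
      · linarith
      · exact absurd h1 hq.ne'
    have : Real.cos (φ - π) = 1 := by
      rw [Real.cos_sub, Real.cos_pi, Real.sin_pi]; simp [hc]
    obtain ⟨k, hk⟩ := Real.cos_eq_one_iff _ |>.mp this
    exact ⟨k, by linarith [hk]⟩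
  · rintro ⟨m, rfl⟩
    have : Real.cos (π + 2 * π * m) = -1 := by
      rw [show π + 2 * π * (m:ℝ) = π + (m:ℤ) * (2 * π) by push_cast; ring,
        Real.cos_add_int_mul_two_pi, Real.cos_pi]
    rw [this]; ring

/-- The alkane potential energy landscape `fₙ(φ₁, …, φₙ) = Σᵢ V(φᵢ)` is
nonnegative, and vanishes exactly at the fully stretched (all-trans)
conformation where every dihedral angle satisfies `φᵢ ≡ π (mod 2π)`. -/
theorem alkane_global_min (n : ℕ) (hn : 1 ≤ n) (φ : Fin n → ℝ) :
    0 ≤ ∑ i, V (φ i) ∧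
    ((∑ i, V (φ i)) = 0 ↔ ∀ i, ∃ m : ℤ, φ i = π + 2 * π * m) := by
  constructor
  · exact Finset.sum_nonneg fun i _ => V_nonneg (φ i)
  · rw [Finset.sum_eq_zero_iff_of_nonneg fun i _ => V_nonneg (φ i)]
    constructor
    · intro h i; exact (V_eq_zero_iff (φ i)).mp (h i (Finset.mem_univ i))
    · intro h i _; exact (V_eq_zero_iff (φ i)).mpr (h i)
end
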